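/- arXiv:1601.00779 — 2 statements merged into one kernel-verified Lean document; each statement's English description precedes it below -/
import Mathlib

section
/- Let v₁ = α(v) ∂ₓ v where v is a smooth solution of ∂ₜv + a(v) ∂ₓ v + ∂ₓ(α(v) ∂ₓ(α(v) ∂ₓ v)) = 0. Then v₁ satisfies ∂ₜ v₁ + a(v) ∂ₓ v₁ + ∂ₓ(α(v) ∂ₓ(α(v) ∂ₓ v₁)) = −(a'(v)/α(v)) v₁². -/
noncomputable section

variable {G : Type*} [NormedAddCommGroup G] [NormedSpace ℝ G]

/-- derivative along the first coordinate -/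
lemma hda_fst {F : ℝ × ℝ → G} (hF : Differentiable ℝ F) (t x : ℝ) :
    HasDerivAt (fun s => F (s, x)) (fderiv ℝ F (t, x) (1, 0)) t :=
  (hF (t, x)).hasFDerivAt.comp_hasDerivAt t ((hasDerivAt_id t).prodMk (hasDerivAt_const t x))

lemma hda_snd {F : ℝ × ℝ → G} (hF : Differentiable ℝ F) (t x : ℝ) :
    HasDerivAt (fun y => F (t, y)) (fderiv ℝ F (t, x) (0, 1)) x :=
  (hF (t, x)).hasFDerivAt.comp_hasDerivAt x ((hasDerivAt_const x t).prodMk (hasDerivAt_id x))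

/-- partial derivative in direction `w` -/
def pd (w : ℝ × ℝ) (F : ℝ × ℝ → ℝ) (q : ℝ × ℝ) : ℝ := fderiv ℝ F q w

lemma deriv_fst {F : ℝ × ℝ → ℝ} (hF : Differentiable ℝ F) (t x : ℝ) :
    deriv (fun s => F (s, x)) t = pd (1, 0) F (t, x) := (hda_fst hF t x).deriv

lemma deriv_snd {F : ℝ × ℝ → ℝ} (hF : Differentiable ℝ F) (t x : ℝ) :
    deriv (fun y => F (t, y)) x = pd (0, 1) F (t, x) := (hda_snd hF t x).deriv

lemma contDiff_pd {F : ℝ × ℝ → ℝ} (hF : ContDiff ℝ (⊤ : ℕ∞) F) (w : ℝ × ℝ) :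
    ContDiff ℝ (⊤ : ℕ∞) (pd w F) :=
  (hF.fderiv_right (by simp)).clm_apply contDiff_const

lemma pd_mul {F G : ℝ × ℝ → ℝ} (hF : Differentiable ℝ F) (hG : Differentiable ℝ G)
    (w q : ℝ × ℝ) :
    pd w (fun p => F p * G p) q = pd w F q * G q + F q * pd w G q := by
  unfold pd
  rw [fderiv_fun_mul (hF q) (hG q)]
  simp [smul_eq_mul]
  ring

lemma pd_add {F G : ℝ × ℝ → ℝ} (hF : Differentiable ℝ F) (hG : Differentiable ℝ G)
    (w q : ℝ × ℝ) :
    pd w (fun p => F p + G p) q = pd w F q + pd w G q := by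
  unfold pd
  rw [fderiv_fun_add (hF q) (hG q)]
  simp

lemma pd_comp {g : ℝ → ℝ} (hg : Differentiable ℝ g) {F : ℝ × ℝ → ℝ}
    (hF : Differentiable ℝ F) (w q : ℝ × ℝ) :
    pd w (fun p => g (F p)) q = deriv g (F q) * pd w F q := by
  unfold pd
  rw [show (fun p => g (F p)) = g ∘ F from rfl, fderiv_comp q (hg _) (hF q)]
  simp only [ContinuousLinearMap.comp_apply]
  rw [show fderiv ℝ F q w = (fderiv ℝ F q w) • (1 : ℝ) by simp, map_smul]
  simp only [fderiv_apply_one_eq_deriv, smul_eq_mul]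
  ring

lemma pd_symm {F : ℝ × ℝ → ℝ} (hF : ContDiff ℝ (⊤ : ℕ∞) F) (q : ℝ × ℝ) :
    pd (0, 1) (pd (1, 0) F) q = pd (1, 0) (pd (0, 1) F) q := by
  have hD : ContDiff ℝ (⊤ : ℕ∞) (fderiv ℝ F) := hF.fderiv_right (by simp)
  have hsym := second_derivative_symmetric (f := F) (f' := fderiv ℝ F)
      (f'' := fderiv ℝ (fderiv ℝ F) q)
      (fun y => (hF.differentiable (by simp) y).hasFDerivAt)
      ((hD.differentiable (by simp) q).hasFDerivAt) ((0 : ℝ), (1 : ℝ)) (1, 0)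
  show fderiv ℝ (fun p => fderiv ℝ F p (1, 0)) q (0, 1)
      = fderiv ℝ (fun p => fderiv ℝ F p (0, 1)) q (1, 0)
  rw [fderiv_clm_apply (hD.differentiable (by simp) q) (differentiableAt_const _),
      fderiv_clm_apply (hD.differentiable (by simp) q) (differentiableAt_const _)]
  simpa using hsym


open MeasureTheory

/-- The equation satisfied by `v₁ = α(v) ∂ₓ v` when `v` is a smooth solution of
`∂ₜ v + a(v) ∂ₓ v + ∂ₓ(α(v) ∂ₓ(α(v) ∂ₓ v)) = 0`:
`∂ₜ v₁ + a(v) ∂ₓ v₁ + ∂ₓ(α(v) ∂ₓ(α(v) ∂ₓ v₁)) = −(a'(v)/α(v)) v₁²`. -/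
theorem stmt3 (a α : ℝ → ℝ) (ha : ContDiff ℝ (⊤ : ℕ∞) a) (hα : ContDiff ℝ (⊤ : ℕ∞) α)
    (hαpos : ∀ y, 0 < α y)
    (v : ℝ → ℝ → ℝ) (hv : ContDiff ℝ (⊤ : ℕ∞) (fun q : ℝ × ℝ => v q.1 q.2))
    (heq : ∀ t x, deriv (fun s => v s x) t + a (v t x) * deriv (v t) x
      + deriv (fun y => α (v t y) * deriv (fun z => α (v t z) * deriv (v t) z) y) x = 0)
    (v₁ : ℝ → ℝ → ℝ) (hv₁ : ∀ t x, v₁ t x = α (v t x) * deriv (v t) x) :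
    ∀ t x, deriv (fun s => v₁ s x) t + a (v t x) * deriv (v₁ t) x
      + deriv (fun y => α (v t y) * deriv (fun z => α (v t z) * deriv (v₁ t) z) y) x
      = -(deriv a (v t x) / α (v t x)) * (v₁ t x) ^ 2 := by
  -- uncurried solution and derived quantities
  set V : ℝ × ℝ → ℝ := fun q => v q.1 q.2 with hVdef
  have hVsm : ContDiff ℝ (⊤ : ℕ∞) V := hv
  have hVd : Differentiable ℝ V := hVsm.differentiable (by simp)
  have had : Differentiable ℝ a := ha.differentiable (by simp)
  have hαd : Differentiable ℝ α := hα.differentiable (by simp)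
  -- v₁ uncurried
  set P : ℝ × ℝ → ℝ := fun q => α (V q) * pd (0, 1) V q with hPdef
  have hPsm : ContDiff ℝ (⊤ : ℕ∞) P := (hα.comp hVsm).mul (contDiff_pd hVsm _)
  have hPd : Differentiable ℝ P := hPsm.differentiable (by simp)
  set K : ℝ × ℝ → ℝ := fun q => α (V q) * pd (0, 1) P q with hKdef
  have hKsm : ContDiff ℝ (⊤ : ℕ∞) K := (hα.comp hVsm).mul (contDiff_pd hPsm _)
  have hKd : Differentiable ℝ K := hKsm.differentiable (by simp)
  set M : ℝ × ℝ → ℝ := fun q => α (V q) * pd (0, 1) K q with hMdef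
  have hMsm : ContDiff ℝ (⊤ : ℕ∞) M := (hα.comp hVsm).mul (contDiff_pd hKsm _)
  have hMd : Differentiable ℝ M := hMsm.differentiable (by simp)
  -- curried derivatives are the uncurried partials
  have hvx : ∀ t x, deriv (v t) x = pd (0, 1) V (t, x) := fun t x => deriv_snd hVd t x
  -- rewrite the equation in uncurried form
  have heq' : ∀ q : ℝ × ℝ, pd (1, 0) V q + a (V q) * pd (0, 1) V q + pd (0, 1) K q = 0 := by
    rintro ⟨t, x⟩
    have h2 : (fun z => α (v t z) * deriv (v t) z) = fun z => P (t, z) := by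
      funext z; rw [hvx t z]
    have h3 : (fun y => α (v t y) * deriv (fun z => α (v t z) * deriv (v t) z) y)
        = fun y => K (t, y) := by
      funext y; rw [h2, deriv_snd hPd t y]
    have := heq t x
    rwa [hvx t x, deriv_fst hVd t x, h3, deriv_snd hKd t x] at this
  intro t x
  -- rewrite v₁ and the goal in uncurried form
  have hP : ∀ t x, v₁ t x = P (t, x) := by
    intro t x; rw [hv₁ t x, hvx t x]
  have hPfun : ∀ t, v₁ t = fun y => P (t, y) := fun t => funext fun y => hP t y
  have hgt : deriv (fun s => v₁ s x) t = pd (1, 0) P (t, x) := by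
    rw [show (fun s => v₁ s x) = fun s => P (s, x) from funext fun s => hP s x]
    exact deriv_fst hPd t x
  have hgx : deriv (v₁ t) x = pd (0, 1) P (t, x) := by
    rw [hPfun t]; exact deriv_snd hPd t x
  have hinner : (fun z => α (v t z) * deriv (v₁ t) z) = fun z => K (t, z) := by
    funext z; rw [hPfun t, deriv_snd hPd t z]
  have hg3 : deriv (fun y => α (v t y) * deriv (fun z => α (v t z) * deriv (v₁ t) z) y) x
      = pd (0, 1) M (t, x) := by
    have h4 : (fun y => α (v t y) * deriv (fun z => α (v t z) * deriv (v₁ t) z) y)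
        = fun y => M (t, y) := by
      funext y; rw [hinner, deriv_snd hKd t y]
    rw [h4]; exact deriv_snd hMd t x
  rw [hgt, hgx, hg3, hP t x]
  -- now a purely uncurried computation at q = (t, x)
  set q : ℝ × ℝ := (t, x) with hq
  -- the zero function N
  have hN0 : pd (0, 1)
      (fun p => α (V p) * pd (1, 0) V p + a (V p) * P p + M p) q = 0 := by
    have hfz : (fun p => α (V p) * pd (1, 0) V p + a (V p) * P p + M p)
        = fun _ => (0 : ℝ) := by
      funext p
      have hMp : M p = α (V p) * pd (0, 1) K p := rfl
      have hPp : P p = α (V p) * pd (0, 1) V p := rfl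
      linear_combination α (V p) * heq' p + a (V p) * hPp + hMp
    rw [hfz]
    simp [pd]
  -- expand hN0
  have hd1 : Differentiable ℝ (fun p => α (V p) * pd (1, 0) V p) :=
    (hαd.comp hVd).mul ((contDiff_pd hVsm _).differentiable (by simp))
  have hd2 : Differentiable ℝ (fun p => a (V p) * P p) := (had.comp hVd).mul hPd
  have hsplit : pd (0, 1) (fun p => α (V p) * pd (1, 0) V p + a (V p) * P p + M p) q
      = pd (0, 1) (fun p => α (V p) * pd (1, 0) V p) q
        + pd (0, 1) (fun p => a (V p) * P p) q + pd (0, 1) M q := by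
    rw [pd_add (F := fun p => α (V p) * pd (1, 0) V p + a (V p) * P p) (hd1.add hd2) hMd, pd_add hd1 hd2]
  have hT1 : pd (0, 1) (fun p => α (V p) * pd (1, 0) V p) q
      = deriv α (V q) * pd (0, 1) V q * pd (1, 0) V q
        + α (V q) * pd (0, 1) (pd (1, 0) V) q := by
    rw [pd_mul (F := fun p => α (V p)) (G := fun p => pd (1, 0) V p)
        (hαd.comp hVd) ((contDiff_pd hVsm _).differentiable (by simp)),
      pd_comp (g := α) (F := V) hαd hVd]
  have hT2 : pd (0, 1) (fun p => a (V p) * P p) q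
      = deriv a (V q) * pd (0, 1) V q * P q + a (V q) * pd (0, 1) P q := by
    rw [pd_mul (F := fun p => a (V p)) (G := P) (had.comp hVd) hPd,
      pd_comp (g := a) (F := V) had hVd]
  have hdtP : pd (1, 0) P q
      = deriv α (V q) * pd (1, 0) V q * pd (0, 1) V q
        + α (V q) * pd (1, 0) (pd (0, 1) V) q := by
    rw [hPdef]
    rw [pd_mul (F := fun p => α (V p)) (G := fun p => pd (0, 1) V p)
        (hαd.comp hVd) ((contDiff_pd hVsm _).differentiable (by simp)),
      pd_comp (g := α) (F := V) hαd hVd]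
  have hsym : pd (0, 1) (pd (1, 0) V) q = pd (1, 0) (pd (0, 1) V) q := pd_symm hVsm q
  have hPq : P q = α (V q) * pd (0, 1) V q := rfl
  have hA : α (V q) ≠ 0 := (hαpos _).ne'
  have hVq : V q = v t x := rfl
  rw [← hVq]
  rw [hsplit, hT1, hT2] at hN0
  have key : pd (1, 0) P q + a (V q) * pd (0, 1) P q + pd (0, 1) M q
      = -(deriv a (V q) * pd (0, 1) V q * P q) := by
    linear_combination hN0 + hdtP - α (V q) * hsym
  rw [key, hPq]
  field_simp
end
end

section
/- Existence of the gauge for the difference equation: let α : I → ℝ be smooth and positive, J ⊂ I compact, and let u, w : ℝ → J be smooth with u − w ∈ L²(ℝ) and ∂ₓ(α(u)²) bounded. Then the ODE ∂ₓφ/φ = −(1/3) ∂ₓ(α(u))/α(u) − (1/6) ∂ₓ(α(u)²) (α(w)^{−2} − α(u)^{−2}) admits a solution φ : ℝ → ℝ that is bounded above and bounded below away from zero. -/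
open MeasureTheory

/-- Existence of the gauge for the difference equation: under the stated
hypotheses the ODE
`∂ₓφ/φ = −(1/3) ∂ₓ(α(u))/α(u) − (1/6) ∂ₓ(α(u)²) (α(w)⁻² − α(u)⁻²)`
has a solution `φ` bounded above and bounded below away from zero. -/
theorem stmt17 (I J : Set ℝ) (hJI : J ⊆ I) (hJ : IsCompact J) (hJne : J.Nonempty)
    (α : ℝ → ℝ) (hα : ContDiff ℝ (⊤ : ℕ∞) α) (hαpos : ∀ y ∈ I, 0 < α y)
    (u w : ℝ → ℝ) (hu : ContDiff ℝ (⊤ : ℕ∞) u) (hw : ContDiff ℝ (⊤ : ℕ∞) w)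
    (huJ : ∀ x, u x ∈ J) (hwJ : ∀ x, w x ∈ J)
    (hL2 : MemLp (fun x => u x - w x) 2 volume)
    (hbd : ∃ M : ℝ, ∀ x, |deriv (fun y => α (u y) ^ 2) x| ≤ M)
    (hL1 : Integrable (fun x => (α (w x)) ⁻¹ ^ 2 - (α (u x))⁻¹ ^ 2) volume) :
    ∃ φ : ℝ → ℝ, (∃ m M : ℝ, 0 < m ∧ ∀ x, m ≤ φ x ∧ φ x ≤ M) ∧
      ∀ x, deriv φ x / φ x
        = -(1 / 3) * deriv (fun y => α (u y)) x / α (u x)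
          - (1 / 6) * deriv (fun y => α (u y) ^ 2) x
              * ((α (w x))⁻¹ ^ 2 - (α (u x))⁻¹ ^ 2) := by
  obtain ⟨M0, hM0⟩ := hbd
  have hαu : ContDiff ℝ (⊤ : ℕ∞) (fun y => α (u y)) := hα.comp hu
  have hαw : ContDiff ℝ (⊤ : ℕ∞) (fun y => α (w y)) := hα.comp hw
  have hαu2 : ContDiff ℝ (⊤ : ℕ∞) (fun y => α (u y) ^ 2) := hαu.pow 2
  have hupos : ∀ x, 0 < α (u x) := fun x => hαpos _ (hJI (huJ x))
  have hwpos : ∀ x, 0 < α (w x) := fun x => hαpos _ (hJI (hwJ x))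
  set g : ℝ → ℝ := fun t =>
    deriv (fun y => α (u y) ^ 2) t * ((α (w t))⁻¹ ^ 2 - (α (u t))⁻¹ ^ 2) with hgdef
  have hdc : Continuous (deriv (fun y => α (u y) ^ 2)) := hαu2.continuous_deriv (by simp)
  have h2c : Continuous fun t => (α (w t))⁻¹ ^ 2 - (α (u t))⁻¹ ^ 2 :=
    ((hαw.continuous.inv₀ fun x => (hwpos x).ne').pow 2).sub
      ((hαu.continuous.inv₀ fun x => (hupos x).ne').pow 2)
  have hgc : Continuous g := hdc.mul h2c
  have hgint : Integrable g :=
    hL1.bdd_mul hdc.aestronglyMeasurable (c := M0) (ae_of_all _ fun x => by simpa using hM0 x)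
  set F : ℝ → ℝ := fun x => ∫ t in (0:ℝ)..x, g t with hFdef
  have hF : ∀ x, HasDerivAt F (g x) x := fun x =>
    (hgc.integral_hasStrictDerivAt 0 x).hasDerivAt
  set B : ℝ := ∫ t, |g t| with hBdef
  have hFbd : ∀ x, |F x| ≤ B := by
    intro x
    calc |F x| ≤ ∫ t in Set.uIoc 0 x, |g t| := by
          simpa [Real.norm_eq_abs] using
            intervalIntegral.norm_integral_le_integral_norm_uIoc (f := g) (a := 0) (b := x)
      _ ≤ B := setIntegral_le_integral hgint.abs (ae_of_all _ fun t => abs_nonneg _)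
  obtain ⟨a, haJ, hamin⟩ := hJ.exists_isMinOn hJne hα.continuous.continuousOn
  obtain ⟨b, hbJ, hbmax⟩ := hJ.exists_isMaxOn hJne hα.continuous.continuousOn
  have hapos : 0 < α a := hαpos _ (hJI haJ)
  set G : ℝ → ℝ := fun x => -(1/3) * Real.log (α (u x)) - (1/6) * F x with hGdef
  have hG : ∀ x, HasDerivAt G
      (-(1/3) * (deriv (fun y => α (u y)) x / α (u x)) - (1/6) * g x) x := by
    intro x
    have hd : HasDerivAt (fun y => α (u y)) (deriv (fun y => α (u y)) x) x :=
      (hαu.differentiable (by simp) x).hasDerivAt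
    have hlog : HasDerivAt (fun y => Real.log (α (u y)))
        (deriv (fun y => α (u y)) x / α (u x)) x := hd.log (hupos x).ne'
    exact (hlog.const_mul (-(1/3))).sub ((hF x).const_mul (1/6))
  refine ⟨fun x => Real.exp (G x),
    ⟨Real.exp (-(1/3) * Real.log (α b) - (1/6) * B),
     Real.exp (-(1/3) * Real.log (α a) + (1/6) * B), Real.exp_pos _, ?_⟩, ?_⟩
  · intro x
    have h1 : Real.log (α a) ≤ Real.log (α (u x)) :=
      Real.log_le_log hapos (hamin (huJ x))
    have h2 : Real.log (α (u x)) ≤ Real.log (α b) :=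
      Real.log_le_log (hupos x) (hbmax (huJ x))
    have h3 := abs_le.mp (hFbd x)
    constructor <;> apply Real.exp_le_exp.mpr <;> simp only [hGdef] <;> nlinarith [h3.1, h3.2]
  · intro x
    have hGx := hG x
    have hφ : ∀ y, Real.exp (G y) = Real.exp (G y) := fun _ => rfl
    have hd : HasDerivAt (fun y => Real.exp (G y))
        (Real.exp (G x) * (-(1/3) * (deriv (fun y => α (u y)) x / α (u x)) - (1/6) * g x)) x :=
      hGx.exp
    rw [hd.deriv]
    have hne : Real.exp (G x) ≠ 0 := (Real.exp_pos _).ne'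
    rw [mul_comm, mul_div_assoc]
    show _ * (Real.exp (G x) / Real.exp (G x)) = _
    rw [div_self hne, mul_one]
    simp only [hgdef]
    ring
end
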